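/- For every n ≥ 1, D(P_n, -1) equals 1 if n ≡ 0 or 3 (mod 4), and equals -1 if n ≡ 1 or 2 (mod 4). -/

import Mathlib

open SimpleGraph Polynomial Finset

open Classical in
/-- The number of dominating sets of `G` of cardinality `i`. -/
noncomputable def domCount {V : Type*} [Fintype V] [DecidableEq V]
    (G : SimpleGraph V) (i : ℕ) : ℕ :=
  (Finset.univ.filter fun S : Finset V =>
    S.card = i ∧ ∀ v : V, v ∈ S ∨ ∃ u ∈ S, G.Adj u v).card

/-- The domination polynomial of `G`. -/
noncomputable def domPoly {V : Type*} [Fintype V] [DecidableEq V]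
    (G : SimpleGraph V) : Polynomial ℤ :=
  ∑ i ∈ Finset.range (Fintype.card V + 1), Polynomial.C (domCount G i : ℤ) * Polynomial.X ^ i

/-- The domination number of `G`. -/
noncomputable def domNum {V : Type*} [Fintype V] [DecidableEq V] (G : SimpleGraph V) : ℕ :=
  sInf {i | ∃ S : Finset V, S.card = i ∧ ∀ v : V, v ∈ S ∨ ∃ u ∈ S, G.Adj u v}

/-!
Evaluating at `x` turns `domPoly G` into `∑ x ^ #S` over the dominating sets `S`. On the path
with vertices `0, …, n-1`, split a set according to whether it contains the last vertex. This
couples `p n = D(P_n, x)` with the corresponding sum `q n` over the sets dominating every vertex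
but the last one:
`q (n+1) = p n + x q n` and `p (n+2) = x (q (n+1) + q n)`.
At `x = -1` these combine to `p (n+2) = -p n`, and `p 0 = 1`, `p 1 = -1`.
-/

open Classical in
lemma domPoly_eval {V : Type*} [Fintype V] [DecidableEq V] (G : SimpleGraph V) (x : ℤ) :
    (domPoly G).eval x =
      ∑ S with ∀ v, v ∈ S ∨ ∃ u ∈ S, G.Adj u v, x ^ #S := by
  rw [← sum_fiberwise_of_maps_to (g := Finset.card) (t := range (Fintype.card V + 1))
    fun S _ => mem_range_succ_iff.mpr (card_le_univ S)]
  simp only [domPoly, eval_finsetSum, eval_mul, eval_C, eval_pow, eval_X, domCount]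
  refine sum_congr rfl fun i _ => ?_
  rw [filter_filter, sum_congr rfl fun S hS => by rw [(mem_filter.mp hS).2.2], sum_const,
    nsmul_eq_mul]
  simp only [and_comm]

/-- `S` dominates the vertices `0, …, m-1` of the path `0 - 1 - 2 - ⋯` on `ℕ`. -/
def PathDominatesBelow (m : ℕ) (S : Finset ℕ) : Prop :=
  ∀ i < m, ∃ j ∈ S, i ≤ j + 1 ∧ j ≤ i + 1

instance (m : ℕ) : DecidablePred (PathDominatesBelow m) := fun S => by
  unfold PathDominatesBelow; infer_instance

/-- The vertex `n` dominates exactly `n - 1`, `n`, `n + 1` among the vertices `< m`. -/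
lemma pathDominatesBelow_insert {m n : ℕ} {S : Finset ℕ} (h₁ : n ≤ m + 1) (h₂ : m ≤ n + 2) :
    PathDominatesBelow m (insert n S) ↔ PathDominatesBelow (n - 1) S := by
  constructor
  · intro h i hi
    obtain ⟨j, hj, hij⟩ := h i (by omega)
    rcases mem_insert.mp hj with rfl | hj
    · omega
    · exact ⟨j, hj, hij⟩
  · intro h i hi
    by_cases hin : i < n - 1
    · obtain ⟨j, hj, hij⟩ := h i hin
      exact ⟨j, mem_insert_of_mem hj, hij⟩
    · exact ⟨n, mem_insert_self n S, by omega⟩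

lemma not_pathDominatesBelow {m n : ℕ} {S : Finset ℕ} (hS : S ⊆ range n) (h : n + 1 < m) :
    ¬ PathDominatesBelow m S := fun hdom => by
  obtain ⟨j, hj, hj'⟩ := hdom (n + 1) h
  have := mem_range.mp (hS hj)
  omega

def weightedCount (x : ℤ) (n : ℕ) (P : Finset ℕ → Prop) [DecidablePred P] : ℤ :=
  ∑ S ∈ (range n).powerset with P S, x ^ #S

lemma weightedCount_eq_zero {x : ℤ} {n : ℕ} {P : Finset ℕ → Prop} [DecidablePred P]
    (h : ∀ S ⊆ range n, ¬ P S) : weightedCount x n P = 0 :=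
  sum_eq_zero fun S hS =>
    absurd (mem_filter.mp hS).2 (h S (mem_powerset.mp (mem_filter.mp hS).1))

lemma weightedCount_succ (x : ℤ) (n : ℕ) (P : Finset ℕ → Prop) [DecidablePred P] :
    weightedCount x (n + 1) P =
      weightedCount x n P + x * weightedCount x n (fun S => P (insert n S)) := by
  simp only [weightedCount, sum_filter, mul_sum]
  rw [range_add_one, sum_powerset_insert notMem_range_self]
  congr 1
  refine sum_congr rfl fun S hS => ?_
  have : n ∉ S := fun h => notMem_range_self (mem_powerset.mp hS h)
  split_ifs <;> simp [card_insert_of_notMem this, pow_succ, mul_comm]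

/-- `D(P_n, x)`. -/
def pathDomSum (x : ℤ) (n : ℕ) : ℤ := weightedCount x n (PathDominatesBelow n)

def pathAlmostDomSum (x : ℤ) (n : ℕ) : ℤ := weightedCount x n (PathDominatesBelow (n - 1))

lemma pathAlmostDomSum_succ (x : ℤ) (n : ℕ) :
    pathAlmostDomSum x (n + 1) = pathDomSum x n + x * pathAlmostDomSum x n := by
  rw [pathAlmostDomSum, Nat.add_sub_cancel, weightedCount_succ]
  simp only [pathDominatesBelow_insert (m := n) (n := n) (by omega) (by omega)]
  rfl

lemma pathDomSum_add_two (x : ℤ) (n : ℕ) :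
    pathDomSum x (n + 2) = x * (pathAlmostDomSum x (n + 1) + pathAlmostDomSum x n) := by
  have hwithout_top :
      weightedCount x (n + 1) (PathDominatesBelow (n + 2)) = x * pathAlmostDomSum x n := by
    rw [weightedCount_succ, weightedCount_eq_zero fun S hS => not_pathDominatesBelow hS (by omega)]
    simp only [pathDominatesBelow_insert (m := n + 2) (n := n) (by omega) (by omega), zero_add]
    rfl
  rw [pathDomSum, weightedCount_succ, hwithout_top]
  simp only [pathDominatesBelow_insert (m := n + 2) (n := n + 1) (by omega) (by omega)]
  rw [pathAlmostDomSum, mul_add, add_comm]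
  rfl

lemma pathDomSum_neg_one_add_two (n : ℕ) : pathDomSum (-1) (n + 2) = -pathDomSum (-1) n := by
  rw [pathDomSum_add_two, pathAlmostDomSum_succ]
  ring

lemma pathDomSum_neg_one (n : ℕ) :
    pathDomSum (-1) n = if n % 4 = 0 ∨ n % 4 = 3 then 1 else -1 := by
  induction n using Nat.twoStepInduction with
  | zero => decide
  | one => decide
  | more n ih _ =>
    rw [pathDomSum_neg_one_add_two, ih]
    have : (n + 2) % 4 = (n % 4 + 2) % 4 := by omega
    rcases (by omega : n % 4 = 0 ∨ n % 4 = 1 ∨ n % 4 = 2 ∨ n % 4 = 3) with h | h | h | h <;>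
      simp [this, h]

lemma pathGraph_dominates_iff {n : ℕ} (S : Finset (Fin n)) :
    (∀ v, v ∈ S ∨ ∃ u ∈ S, (pathGraph n).Adj u v) ↔
      PathDominatesBelow n (S.map Fin.valEmbedding) := by
  simp only [PathDominatesBelow, mem_map, Fin.valEmbedding_apply, pathGraph_adj]
  refine ⟨fun h i hi => ?_, fun h v => ?_⟩
  · rcases h ⟨i, hi⟩ with hv | ⟨u, hu, hadj⟩
    · exact ⟨i, ⟨_, hv, rfl⟩, by omega⟩
    · exact ⟨u, ⟨u, hu, rfl⟩, by simp only at hadj; omega⟩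
  · obtain ⟨_, ⟨u, hu, rfl⟩, hvu⟩ := h v v.isLt
    by_cases huv : u = v
    · exact .inl (huv ▸ hu)
    · exact .inr ⟨u, hu, by have := Fin.val_ne_of_ne huv; omega⟩

lemma domPoly_pathGraph_eval (n : ℕ) (x : ℤ) :
    (domPoly (pathGraph n)).eval x = pathDomSum x n := by
  rw [domPoly_eval, pathDomSum, weightedCount]
  refine sum_bij (fun S _ => S.map Fin.valEmbedding) (fun S hS => ?_)
    (fun _ _ _ _ h => map_injective _ h) (fun T hT => ?_) (fun S _ => by rw [card_map])
  · simp only [mem_filter, mem_univ, true_and] at hS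
    refine mem_filter.mpr ⟨mem_powerset.mpr fun i hi => ?_, (pathGraph_dominates_iff S).mp hS⟩
    obtain ⟨v, _, rfl⟩ := mem_map.mp hi
    exact mem_range.mpr v.isLt
  · rw [mem_filter, mem_powerset] at hT
    have hlt : ∀ m ∈ T, m < n := fun m hm => mem_range.mp (hT.1 hm)
    refine ⟨T.attachFin hlt, ?_, map_valEmbedding_attachFin hlt⟩
    simp only [mem_filter, mem_univ, true_and, pathGraph_dominates_iff,
      map_valEmbedding_attachFin hlt]
    exact hT.2

theorem domPoly_path_neg_one_general (n : ℕ) :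
    (domPoly (pathGraph n)).eval (-1) =
      if n % 4 = 0 ∨ n % 4 = 3 then 1 else -1 := by
  rw [domPoly_pathGraph_eval, pathDomSum_neg_one]

theorem domPoly_path_neg_one (n : ℕ) (hn : 1 ≤ n) :
    (domPoly (pathGraph n)).eval (-1) =
      if n % 4 = 0 ∨ n % 4 = 3 then 1 else -1 :=
  domPoly_path_neg_one_general n
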